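/- arXiv:1906.12189 — 2 statements merged into one kernel-verified Lean document; each statement's English description precedes it below -/
import Mathlib

section
/- For any two ellipsoids E(p₁,Q₁) and E(p₂,Q₂) in ℝⁿ with symmetric positive definite shape matrices, and any constant c > 0, the Minkowski sum E(p₁,Q₁) ⊕ E(p₂,Q₂) is contained in the ellipsoid E(p₁+p₂, (1+c⁻¹)Q₁ + (1+c)Q₂). -/
/-!
For positive definite `A`, `aᵀA⁻¹a = max_v (2 vᵀa - vᵀAv)`, the maximum being attained at
`v = A⁻¹a`. Evaluating both maxima at the single point `v = (A + B)⁻¹(a + b)` gives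
`(a + b)ᵀ(A + B)⁻¹(a + b) ≤ aᵀA⁻¹a + bᵀB⁻¹b`. With `A = sQ₁`, `B = tQ₂` the right side is at
most `s⁻¹ + t⁻¹` on the Minkowski sum, and `s = 1 + c⁻¹`, `t = 1 + c` give `s⁻¹ + t⁻¹ = 1`.
-/

open Matrix Pointwise

def ellipsoid {n : ℕ} (p : Fin n → ℝ) (Q : Matrix (Fin n) (Fin n) ℝ) :
    Set (Fin n → ℝ) :=
  {x | (x - p) ⬝ᵥ Q⁻¹ *ᵥ (x - p) ≤ 1}

namespace Matrix.PosDef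

variable {ι : Type*} [Fintype ι]

lemma isUnit_det [DecidableEq ι] {A : Matrix ι ι ℝ} (hA : A.PosDef) : IsUnit A.det :=
  (isUnit_iff_isUnit_det A).1 hA.isUnit

lemma mulVec_inv_mulVec [DecidableEq ι] {A : Matrix ι ι ℝ} (hA : A.PosDef) (a : ι → ℝ) :
    A *ᵥ (A⁻¹ *ᵥ a) = a := by
  rw [mulVec_mulVec, mul_nonsing_inv _ hA.isUnit_det, one_mulVec]

lemma dotProduct_mulVec_comm {A : Matrix ι ι ℝ} (hA : A.PosDef) (v w : ι → ℝ) :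
    v ⬝ᵥ A *ᵥ w = w ⬝ᵥ A *ᵥ v := by
  rw [← dotProduct_transpose_mulVec, ← conjTranspose_eq_transpose_of_trivial, hA.isHermitian.eq]

lemma two_mul_dotProduct_sub_dotProduct_mulVec_le [DecidableEq ι] {A : Matrix ι ι ℝ}
    (hA : A.PosDef) (v a : ι → ℝ) : 2 * (v ⬝ᵥ a) - v ⬝ᵥ A *ᵥ v ≤ a ⬝ᵥ A⁻¹ *ᵥ a := by
  set w := A⁻¹ *ᵥ a
  have hw : A *ᵥ w = a := hA.mulVec_inv_mulVec a
  have hnonneg : 0 ≤ (v - w) ⬝ᵥ A *ᵥ (v - w) := by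
    simpa using hA.posSemidef.dotProduct_mulVec_nonneg (v - w)
  have hexpand : (v - w) ⬝ᵥ A *ᵥ (v - w) = v ⬝ᵥ A *ᵥ v - 2 * (v ⬝ᵥ a) + a ⬝ᵥ w := by
    have hwv : w ⬝ᵥ A *ᵥ v = v ⬝ᵥ a := by rw [hA.dotProduct_mulVec_comm, hw]
    simp only [mulVec_sub, dotProduct_sub, sub_dotProduct, hw, hwv, dotProduct_comm w a]
    ring
  linarith

lemma dotProduct_add_inv_mulVec_le [DecidableEq ι] {A B : Matrix ι ι ℝ} (hA : A.PosDef)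
    (hB : B.PosDef) (a b : ι → ℝ) :
    (a + b) ⬝ᵥ (A + B)⁻¹ *ᵥ (a + b) ≤ a ⬝ᵥ A⁻¹ *ᵥ a + b ⬝ᵥ B⁻¹ *ᵥ b := by
  set v := (A + B)⁻¹ *ᵥ (a + b)
  have hv : (A + B) *ᵥ v = a + b := (hA.add hB).mulVec_inv_mulVec (a + b)
  have hquad : (a + b) ⬝ᵥ v = v ⬝ᵥ A *ᵥ v + v ⬝ᵥ B *ᵥ v := by
    rw [← dotProduct_add, ← add_mulVec, hv, dotProduct_comm]
  have hlin : (a + b) ⬝ᵥ v = v ⬝ᵥ a + v ⬝ᵥ b := by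
    rw [dotProduct_comm, dotProduct_add]
  linarith [hA.two_mul_dotProduct_sub_dotProduct_mulVec_le v a,
    hB.two_mul_dotProduct_sub_dotProduct_mulVec_le v b]

end Matrix.PosDef

lemma Matrix.dotProduct_smul_inv_mulVec {ι : Type*} [Fintype ι] [DecidableEq ι]
    {A : Matrix ι ι ℝ} (hA : IsUnit A.det) {k : ℝ} (hk : k ≠ 0) (x : ι → ℝ) :
    x ⬝ᵥ (k • A)⁻¹ *ᵥ x = k⁻¹ * (x ⬝ᵥ A⁻¹ *ᵥ x) := by
  have := invertibleOfNonzero hk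
  rw [Matrix.inv_smul (A := A) k hA, invOf_eq_inv, smul_mulVec, dotProduct_smul, smul_eq_mul]

theorem ellipsoid_add_subset {n : ℕ} (p₁ p₂ : Fin n → ℝ) {Q₁ Q₂ : Matrix (Fin n) (Fin n) ℝ}
    (hQ₁ : Q₁.PosDef) (hQ₂ : Q₂.PosDef) {s t : ℝ} (hs : 0 < s) (ht : 0 < t)
    (hst : s⁻¹ + t⁻¹ ≤ 1) :
    ellipsoid p₁ Q₁ + ellipsoid p₂ Q₂ ⊆ ellipsoid (p₁ + p₂) (s • Q₁ + t • Q₂) := by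
  rintro _ ⟨a, ha, b, hb, rfl⟩
  have hsum := (hQ₁.smul hs).dotProduct_add_inv_mulVec_le (hQ₂.smul ht) (a - p₁) (b - p₂)
  rw [dotProduct_smul_inv_mulVec hQ₁.isUnit_det hs.ne',
    dotProduct_smul_inv_mulVec hQ₂.isUnit_det ht.ne'] at hsum
  have ha' := mul_le_mul_of_nonneg_left (show _ ≤ (1 : ℝ) from ha) (inv_nonneg.2 hs.le)
  have hb' := mul_le_mul_of_nonneg_left (show _ ≤ (1 : ℝ) from hb) (inv_nonneg.2 ht.le)
  show (a + b - (p₁ + p₂)) ⬝ᵥ _ ≤ 1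
  rw [add_sub_add_comm]
  linarith

/-- The Minkowski sum of two ellipsoids is contained in the ellipsoid
`E(p₁+p₂, (1+c⁻¹)Q₁ + (1+c)Q₂)` for any `c > 0`. -/
theorem stmt_1 {n : ℕ} (p₁ p₂ : Fin n → ℝ) (Q₁ Q₂ : Matrix (Fin n) (Fin n) ℝ)
    (hQ₁ : Q₁.PosDef) (hQ₂ : Q₂.PosDef) (c : ℝ) (hc : 0 < c) :
    ellipsoid p₁ Q₁ + ellipsoid p₂ Q₂
      ⊆ ellipsoid (p₁ + p₂) ((1 + c⁻¹) • Q₁ + (1 + c) • Q₂) := by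
  refine ellipsoid_add_subset p₁ p₂ hQ₁ hQ₂ (by positivity) (by positivity) (le_of_eq ?_)
  field_simp
  ring
end

section
/- Recursive safety by induction: consider a deterministic system x_{t+1} = f(x_t, π_t(x_t)) where at each time t either (a) a feasible plan is found whose predicted reachable sets satisfy R_s ⊆ X for all intermediate steps and R_T ⊆ X_safe and the reachable sets contain the true trajectory, or (b) the previous plan is shifted and extended by π_safe. Assume X_safe ⊆ X and that for all x ∈ X_safe, the closed-loop trajectory under π_safe remains in X for all future times. If x₀ ∈ X_safe, then x_t ∈ X for all t ∈ ℕ. -/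
/-- Recursive safety of the SafeMPC scheme (deterministic core of Theorem 1):
at each time either a feasible plan is found whose predicted trajectory stays
in `X`, ends in `Xsafe` and is continued by the backup controller, or the
previous plan is shifted and extended by the backup controller.  If the backup
controller keeps any state starting in `Xsafe` inside `X` forever, and
`x 0 ∈ Xsafe`, then the closed-loop state remains in `X` for all times. -/
theorem stmt_15 {p q : ℕ}
    (f : (Fin p → ℝ) → (Fin q → ℝ) → (Fin p → ℝ))
    (piSafe : (Fin p → ℝ) → (Fin q → ℝ))
    (X Xsafe : Set (Fin p → ℝ)) (hsub : Xsafe ⊆ X)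
    (hsafe : ∀ x0 ∈ Xsafe, ∀ t : ℕ, (fun y => f y (piSafe y))^[t] x0 ∈ X)
    (T : ℕ) (hT : 0 < T)
    (x : ℕ → (Fin p → ℝ)) (hx0 : x 0 ∈ Xsafe)
    (feas : ℕ → Prop)
    (plan : ℕ → ℕ → ((Fin p → ℝ) → (Fin q → ℝ)))
    (pred : ℕ → ℕ → (Fin p → ℝ))
    (hpred0 : ∀ t, pred t 0 = x t)
    (hpreds : ∀ t s, pred t (s + 1) = f (pred t s) (plan t s (pred t s)))
    (happly : ∀ t, x (t + 1) = f (x t) (plan t 0 (x t)))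
    (hfeas : ∀ t, feas t →
      (∀ s ≤ T, pred t s ∈ X) ∧ pred t T ∈ Xsafe ∧ ∀ s, T ≤ s → plan t s = piSafe)
    (hshift : ∀ t, ¬ feas (t + 1) → ∀ s, plan (t + 1) s = plan t (s + 1))
    (hinit : ¬ feas 0 → ∀ s, plan 0 s = piSafe) :
    ∀ t, x t ∈ X := by
  -- helper: if the plan is the backup from step m on, pred follows the backup iterates
  have backup : ∀ t m, (∀ s, m ≤ s → plan t s = piSafe) →
      ∀ k, pred t (m + k) = (fun y => f y (piSafe y))^[k] (pred t m) := by
    intro t m hm k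
    induction k with
    | zero => simp
    | succ k ih =>
        rw [show m + (k + 1) = (m + k) + 1 from rfl, hpreds,
          Function.iterate_succ_apply', ← ih, hm (m + k) (Nat.le_add_right m k)]
  -- the key invariant: the whole predicted trajectory stays in X
  have key : ∀ t, ∀ s, pred t s ∈ X := by
    have feasCase : ∀ t, feas t → ∀ s, pred t s ∈ X := by
      intro t ht s
      obtain ⟨hX, hXs, hpl⟩ := hfeas t ht
      rcases le_or_gt s T with h | h
      · exact hX s h
      · obtain ⟨k, rfl⟩ := Nat.exists_eq_add_of_le h.le
        rw [backup t T hpl k]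
        exact hsafe _ hXs k
    intro t
    induction t with
    | zero =>
        by_cases h0 : feas 0
        · exact feasCase 0 h0
        · intro s
          have := backup 0 0 (fun s _ => hinit h0 s) s
          simp only [Nat.zero_add] at this
          rw [this, hpred0]
          exact hsafe _ hx0 s
    | succ t ih =>
        by_cases hft : feas (t + 1)
        · exact feasCase (t + 1) hft
        · have hsh := hshift t hft
          have hps : ∀ s, pred (t + 1) s = pred t (s + 1) := by
            intro s
            induction s with
            | zero =>
                rw [hpred0, happly, hpreds, hpred0]
            | succ s ihs =>
                rw [hpreds, hpreds, ihs, hsh]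
          intro s
          rw [hps]
          exact ih (s + 1)
  intro t
  rw [← hpred0 t]
  exact key t 0
end
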